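/- arXiv:2406.10823 — 6 statements merged into one kernel-verified Lean document; each statement's English description precedes it below -/
import Mathlib

section
/- Let (X, d) be a metric space, T > 0, and let ρ : [0, T] → X be a curve admitting an integrable function m : [0, T] → [0, ∞) with d(ρ(s), ρ(t)) ≤ ∫_s^t m(u) du for all 0 ≤ s ≤ t ≤ T. For each ε > 0 let S_ε : X → X be a map, set N_ε := ⌊T/ε⌋, let x_ε(k) denote the k-fold iterate S_ε^[k](ρ(0)), and define the piecewise-constant interpolation ρ_ε(t) := x_ε(⌊t/ε⌋) for t ∈ [0, T]. Assume consistency: for every δ > 0 there is ε₀ > 0 such that for all 0 < ε < ε₀ and all t ∈ [0, T − ε], d(S_ε(ρ(t)), ρ(t + ε)) ≤ δε. Assume contraction in the limit: for every δ > 0 there is ε₀ > 0 such that for all 0 < ε < ε₀ and all k ∈ {0, 1, …, N_ε − 1}, d(S_ε(x_ε(k)), S_ε(ρ(kε))) ≤ d(x_ε(k), ρ(kε)) + δε. Then sup_{t ∈ [0, T]} d(ρ_ε(t), ρ(t)) → 0 as ε → 0⁺. -/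
/-!
The scheme is stable and consistent along the grid `k ε`, so the error at the grid points
grows by at most `2 δ ε` per step, i.e. by at most `2 δ T` over `[0, T]`. Between grid points
the curve moves by at most `∫ m` over an interval of length `< ε`, which is uniformly small by
the uniform continuity of the primitive of `m` on the compact interval `[0, T]`.
-/

open Set MeasureTheory

theorem MeasureTheory.IntegrableOn.exists_pos_abs_intervalIntegral_lt {m : ℝ → ℝ} {a b : ℝ}
    (hm : IntegrableOn m (uIcc a b)) {η : ℝ} (hη : 0 < η) :
    ∃ ε > 0, ∀ s ∈ uIcc a b, ∀ t ∈ uIcc a b, |t - s| < ε → |∫ u in s..t, m u| < η := by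
  have hF := isCompact_uIcc.uniformContinuousOn_of_continuous
    (intervalIntegral.continuousOn_primitive_interval hm)
  obtain ⟨ε, hε, hFε⟩ := Metric.uniformContinuousOn_iff.1 hF η hη
  refine ⟨ε, hε, fun s hs t ht hst => ?_⟩
  have hint : ∀ x ∈ uIcc a b, IntervalIntegrable m volume a x := fun x hx =>
    (hm.mono_set (uIcc_subset_uIcc left_mem_uIcc hx)).intervalIntegrable
  have := hFε t ht s hs (by rwa [Real.dist_eq])
  rwa [Real.dist_eq, intervalIntegral.integral_interval_sub_left (hint t ht) (hint s hs)] at this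

theorem dist_iterate_le_of_stable_of_consistent {X : Type*} [PseudoMetricSpace X]
    (S : X → X) (x₀ : X) (y : ℕ → X) {n : ℕ} {c₁ c₂ : ℝ}
    (hstable : ∀ k < n, dist (S (S^[k] x₀)) (S (y k)) ≤ dist (S^[k] x₀) (y k) + c₁)
    (hconsistent : ∀ k < n, dist (S (y k)) (y (k + 1)) ≤ c₂) :
    ∀ k ≤ n, dist (S^[k] x₀) (y k) ≤ dist x₀ (y 0) + k * (c₁ + c₂) := by
  intro k
  induction k with
  | zero => simp
  | succ k ih =>
    intro hk
    calc dist (S^[k + 1] x₀) (y (k + 1))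
        ≤ dist (S (S^[k] x₀)) (S (y k)) + dist (S (y k)) (y (k + 1)) := by
          rw [Function.iterate_succ_apply']
          exact dist_triangle _ _ _
      _ ≤ dist x₀ (y 0) + k * (c₁ + c₂) + c₁ + c₂ := by
          linarith [hstable k hk, hconsistent k hk, ih (Nat.le_of_succ_le hk)]
      _ = dist x₀ (y 0) + ((k + 1 : ℕ) : ℝ) * (c₁ + c₂) := by push_cast; ring

theorem natFloor_div_mul_le {t ε : ℝ} (ht : 0 ≤ t) (hε : 0 < ε) : ⌊t / ε⌋₊ * ε ≤ t :=
  (le_div_iff₀ hε).1 (Nat.floor_le (div_nonneg ht hε.le))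

theorem sub_natFloor_div_mul_lt {t ε : ℝ} (hε : 0 < ε) : t - ⌊t / ε⌋₊ * ε < ε := by
  have := (div_lt_iff₀ hε).1 (Nat.lt_floor_add_one (t / ε))
  linarith

theorem succ_mul_le_of_lt_natFloor_div {T ε : ℝ} (hε : 0 < ε) {k : ℕ} (hk : k < ⌊T / ε⌋₊) :
    (k + 1) * ε ≤ T := by
  have hT : 0 ≤ T / ε := by
    by_contra! h
    simp [Nat.floor_of_nonpos h.le] at hk
  exact (le_div_iff₀ hε).1 (by exact_mod_cast (Nat.le_floor_iff hT).1 hk)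

theorem dist_iterate_natCast_mul_le {X : Type*} [PseudoMetricSpace X] {T ε δ : ℝ} (hε : 0 < ε)
    (ρ : ℝ → X) (S : X → X)
    (hconsistent : ∀ t, 0 ≤ t → t ≤ T - ε → dist (S (ρ t)) (ρ (t + ε)) ≤ δ * ε)
    (hstable : ∀ k : ℕ, k < ⌊T / ε⌋₊ →
      dist (S (S^[k] (ρ 0))) (S (ρ (k * ε))) ≤ dist (S^[k] (ρ 0)) (ρ (k * ε)) + δ * ε) :
    ∀ k ≤ ⌊T / ε⌋₊, dist (S^[k] (ρ 0)) (ρ (k * ε)) ≤ 2 * δ * (k * ε) := by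
  intro k hk
  have hgrid := dist_iterate_le_of_stable_of_consistent S (ρ 0) (fun j : ℕ => ρ (j * ε)) hstable
    (fun j hj => by
      have := succ_mul_le_of_lt_natFloor_div hε hj
      simpa [add_mul] using hconsistent (j * ε) (by positivity) (by linarith)) k hk
  simp only [CharP.cast_eq_zero, zero_mul, dist_self, zero_add] at hgrid
  linarith

theorem iterated_scheme_first_order_approximation_general
    {X : Type*} [MetricSpace X]
    (T : ℝ) (hT : 0 < T)
    (ρ : ℝ → X) (m : ℝ → ℝ)
    (hm_int : IntegrableOn m (Icc (0 : ℝ) T))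
    (habs : ∀ s t : ℝ, 0 ≤ s → s ≤ t → t ≤ T →
      dist (ρ s) (ρ t) ≤ ∫ u in s..t, m u)
    (S : ℝ → X → X)
    -- consistency
    (hconsistent : ∀ δ > (0 : ℝ), ∃ ε₀ > (0 : ℝ), ∀ ε : ℝ, 0 < ε → ε < ε₀ →
      ∀ t : ℝ, 0 ≤ t → t ≤ T - ε →
        dist (S ε (ρ t)) (ρ (t + ε)) ≤ δ * ε)
    -- contraction in the limit
    (hcontract : ∀ δ > (0 : ℝ), ∃ ε₀ > (0 : ℝ), ∀ ε : ℝ, 0 < ε → ε < ε₀ →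
      ∀ k : ℕ, k < Nat.floor (T / ε) →
        dist (S ε ((S ε)^[k] (ρ 0))) (S ε (ρ (k * ε)))
          ≤ dist ((S ε)^[k] (ρ 0)) (ρ (k * ε)) + δ * ε) :
    -- uniform convergence of the piecewise-constant interpolation
    ∀ δ > (0 : ℝ), ∃ ε₀ > (0 : ℝ), ∀ ε : ℝ, 0 < ε → ε < ε₀ →
      ∀ t ∈ Icc (0 : ℝ) T,
        dist ((S ε)^[Nat.floor (t / ε)] (ρ 0)) (ρ t) ≤ δ := by
  intro δ hδ
  obtain ⟨ε₁, hε₁, hcons⟩ := hconsistent (δ / (4 * T)) (by positivity)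
  obtain ⟨ε₂, hε₂, hstab⟩ := hcontract (δ / (4 * T)) (by positivity)
  rw [← uIcc_of_le hT.le] at hm_int
  obtain ⟨ε₃, hε₃, hsmall⟩ := hm_int.exists_pos_abs_intervalIntegral_lt (half_pos hδ)
  refine ⟨min ε₁ (min ε₂ ε₃), by positivity, fun ε hε hεlt t ⟨ht₀, htT⟩ => ?_⟩
  simp only [lt_min_iff] at hεlt
  set k := ⌊t / ε⌋₊
  have hkt : k * ε ≤ t := natFloor_div_mul_le ht₀ hε
  have hgrid : dist ((S ε)^[k] (ρ 0)) (ρ (k * ε)) ≤ δ / 2 := by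
    refine (dist_iterate_natCast_mul_le hε ρ (S ε) (hcons ε hε hεlt.1) (hstab ε hε hεlt.2.1) k
      (Nat.floor_le_floor (div_le_div_of_nonneg_right htT hε.le))).trans ?_
    calc 2 * (δ / (4 * T)) * (k * ε) ≤ 2 * (δ / (4 * T)) * T := by gcongr; linarith
      _ = δ / 2 := by field_simp; ring
  have hdrift : dist (ρ (k * ε)) (ρ t) ≤ δ / 2 := by
    have hk₀ : (0 : ℝ) ≤ k * ε := by positivity
    refine (habs _ t hk₀ hkt htT).trans ((le_abs_self _).trans (hsmall _ ?_ t ?_ ?_).le)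
    · rw [uIcc_of_le hT.le]; exact ⟨hk₀, hkt.trans htT⟩
    · rw [uIcc_of_le hT.le]; exact ⟨ht₀, htT⟩
    · rw [abs_of_nonneg (by linarith)]
      linarith [sub_natFloor_div_mul_lt (t := t) hε]
  linarith [dist_triangle ((S ε)^[k] (ρ 0)) (ρ (k * ε)) (ρ t)]

/-- **First-order approximation of an absolutely continuous curve by an iterated scheme.**
If `ρ : [0,T] → X` is a curve with metric speed dominated by an integrable function `m`,
and the family of maps `S ε` is consistent along `ρ` and a contraction in the limit along
its own iterates, then the piecewise-constant interpolation of the iterates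
`k ↦ (S ε)^[k] (ρ 0)` converges to `ρ` uniformly on `[0,T]` as `ε → 0⁺`. -/
theorem iterated_scheme_first_order_approximation
    {X : Type*} [MetricSpace X]
    (T : ℝ) (hT : 0 < T)
    (ρ : ℝ → X) (m : ℝ → ℝ)
    (hm_nonneg : ∀ u ∈ Icc (0 : ℝ) T, 0 ≤ m u)
    (hm_int : IntegrableOn m (Icc (0 : ℝ) T))
    (habs : ∀ s t : ℝ, 0 ≤ s → s ≤ t → t ≤ T →
      dist (ρ s) (ρ t) ≤ ∫ u in s..t, m u)
    (S : ℝ → X → X)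
    -- consistency
    (hconsistent : ∀ δ > (0 : ℝ), ∃ ε₀ > (0 : ℝ), ∀ ε : ℝ, 0 < ε → ε < ε₀ →
      ∀ t : ℝ, 0 ≤ t → t ≤ T - ε →
        dist (S ε (ρ t)) (ρ (t + ε)) ≤ δ * ε)
    -- contraction in the limit
    (hcontract : ∀ δ > (0 : ℝ), ∃ ε₀ > (0 : ℝ), ∀ ε : ℝ, 0 < ε → ε < ε₀ →
      ∀ k : ℕ, k < Nat.floor (T / ε) →
        dist (S ε ((S ε)^[k] (ρ 0))) (S ε (ρ (k * ε)))
          ≤ dist ((S ε)^[k] (ρ 0)) (ρ (k * ε)) + δ * ε) :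
    -- uniform convergence of the piecewise-constant interpolation
    ∀ δ > (0 : ℝ), ∃ ε₀ > (0 : ℝ), ∀ ε : ℝ, 0 < ε → ε < ε₀ →
      ∀ t ∈ Icc (0 : ℝ) T,
        dist ((S ε)^[Nat.floor (t / ε)] (ρ 0)) (ρ t) ≤ δ :=
  iterated_scheme_first_order_approximation_general T hT ρ m hm_int habs S hconsistent hcontract
end

section
/- Let (X, d) be a metric space, T > 0, ρ : [0, T] → X a curve, and z ∈ X with ρ(0) = z. For each ε > 0 let S_ε : X → X and B_ε : X → X be maps; set N_ε := ⌊T/ε⌋, x_ε(k) := S_ε^[k](z) and y_ε(k) := B_ε^[k](z). Assume: (i) (uniform convergence of the Euler scheme) sup_{k ∈ {0,…,N_ε}} d(x_ε(k), ρ(kε)) → 0 as ε → 0⁺; (ii) (consistency along the B-iterates) for every δ > 0 there is ε₀ > 0 such that for all 0 < ε < ε₀ and all k ∈ {1, …, N_ε}, d(y_ε(k), S_ε(y_ε(k−1))) ≤ δε; (iii) (contraction in the limit) for every δ > 0 there is ε₀ > 0 such that for all 0 < ε < ε₀ and all k ∈ {1, …, N_ε}, d(x_ε(k), S_ε(y_ε(k−1)))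 ≤ d(x_ε(k−1), y_ε(k−1)) + δε. Then sup_{k ∈ {0,…,N_ε}} d(ρ(kε), y_ε(k)) → 0 as ε → 0⁺. -/
open Set

/-- **Uniform convergence of the Schrödinger bridge scheme.**
If the Euler iterates `x_ε(k) = (S ε)^[k] z` converge uniformly to the curve `ρ` over the
horizon `k ≤ ⌊T/ε⌋`, the `B`-iterates `y_ε(k) = (B ε)^[k] z` are consistent with one Euler
step, and the Euler map is a contraction in the limit along the `B`-iterates, then the
`B`-iterates also converge uniformly to `ρ` over the horizon. -/
theorem scheme_uniform_convergence
    {X : Type*} [MetricSpace X]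
    (T : ℝ) (hT : 0 < T)
    (ρ : ℝ → X) (z : X) (hz : ρ 0 = z)
    (S B : ℝ → X → X)
    -- (i) uniform convergence of the Euler scheme
    (hEuler : ∀ δ > (0 : ℝ), ∃ ε₀ > (0 : ℝ), ∀ ε : ℝ, 0 < ε → ε < ε₀ →
      ∀ k : ℕ, k ≤ Nat.floor (T / ε) →
        dist ((S ε)^[k] z) (ρ (k * ε)) ≤ δ)
    -- (ii) consistency along the B-iterates
    (hcons : ∀ δ > (0 : ℝ), ∃ ε₀ > (0 : ℝ), ∀ ε : ℝ, 0 < ε → ε < ε₀ →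
      ∀ k : ℕ, 1 ≤ k → k ≤ Nat.floor (T / ε) →
        dist ((B ε)^[k] z) (S ε ((B ε)^[k - 1] z)) ≤ δ * ε)
    -- (iii) contraction in the limit
    (hcontract : ∀ δ > (0 : ℝ), ∃ ε₀ > (0 : ℝ), ∀ ε : ℝ, 0 < ε → ε < ε₀ →
      ∀ k : ℕ, 1 ≤ k → k ≤ Nat.floor (T / ε) →
        dist ((S ε)^[k] z) (S ε ((B ε)^[k - 1] z))
          ≤ dist ((S ε)^[k - 1] z) ((B ε)^[k - 1] z) + δ * ε) :
    -- uniform convergence of the B-iterates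
    ∀ δ > (0 : ℝ), ∃ ε₀ > (0 : ℝ), ∀ ε : ℝ, 0 < ε → ε < ε₀ →
      ∀ k : ℕ, k ≤ Nat.floor (T / ε) →
        dist (ρ (k * ε)) ((B ε)^[k] z) ≤ δ := by
  intro δ hδ
  have hδ2 : (0:ℝ) < δ / 2 := by positivity
  have hδT : (0:ℝ) < δ / (8 * T) := by positivity
  obtain ⟨ε₁, hε₁, h₁⟩ := hEuler (δ / 2) hδ2
  obtain ⟨ε₂, hε₂, h₂⟩ := hcons (δ / (8 * T)) hδT
  obtain ⟨ε₃, hε₃, h₃⟩ := hcontract (δ / (8 * T)) hδT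
  refine ⟨min ε₁ (min ε₂ ε₃), by positivity, ?_⟩
  intro ε hε hεlt k hk
  have hε1 : ε < ε₁ := lt_of_lt_of_le hεlt (min_le_left _ _)
  have hε2 : ε < ε₂ := lt_of_lt_of_le hεlt ((min_le_right _ _).trans (min_le_left _ _))
  have hε3 : ε < ε₃ := lt_of_lt_of_le hεlt ((min_le_right _ _).trans (min_le_right _ _))
  -- key inductive bound on dist x_k y_k
  have key : ∀ j : ℕ, j ≤ Nat.floor (T / ε) →
      dist ((S ε)^[j] z) ((B ε)^[j] z) ≤ (j : ℝ) * (2 * (δ / (8 * T)) * ε) := by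
    intro j
    induction j with
    | zero => intro _; simp
    | succ n ih =>
      intro hn
      have hn' : n ≤ Nat.floor (T / ε) := Nat.le_of_succ_le hn
      have ihn := ih hn'
      have hk1 : 1 ≤ n + 1 := Nat.le_add_left 1 n
      have hsub : (n + 1) - 1 = n := Nat.succ_sub_one n
      have hc := h₃ ε hε hε3 (n + 1) hk1 hn
      have hd := h₂ ε hε hε2 (n + 1) hk1 hn
      rw [hsub] at hc hd
      calc dist ((S ε)^[n+1] z) ((B ε)^[n+1] z)
          ≤ dist ((S ε)^[n+1] z) (S ε ((B ε)^[n] z))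
            + dist (S ε ((B ε)^[n] z)) ((B ε)^[n+1] z) := dist_triangle _ _ _
        _ ≤ (dist ((S ε)^[n] z) ((B ε)^[n] z) + δ / (8 * T) * ε)
            + δ / (8 * T) * ε := by
              have := dist_comm ((B ε)^[n+1] z) (S ε ((B ε)^[n] z)) ▸ hd
              linarith [hd, hc, dist_comm ((B ε)^[n+1] z) (S ε ((B ε)^[n] z))]
        _ ≤ (n : ℝ) * (2 * (δ / (8 * T)) * ε) + 2 * (δ / (8 * T)) * ε := by linarith
        _ = ((n + 1 : ℕ) : ℝ) * (2 * (δ / (8 * T)) * ε) := by push_cast; ring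
  have hxy := key k hk
  -- k * ε ≤ T
  have hkε : (k : ℝ) * ε ≤ T := by
    have h1 : (k : ℝ) ≤ T / ε := by
      calc (k : ℝ) ≤ (Nat.floor (T / ε) : ℝ) := by exact_mod_cast hk
        _ ≤ T / ε := Nat.floor_le (by positivity)
    calc (k : ℝ) * ε ≤ (T / ε) * ε := by nlinarith
      _ = T := by field_simp
  have hxy' : dist ((S ε)^[k] z) ((B ε)^[k] z) ≤ δ / 4 := by
    have : (k : ℝ) * (2 * (δ / (8 * T)) * ε) = ((k : ℝ) * ε) * (δ / (4 * T)) := by ring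
    rw [this] at hxy
    have : ((k : ℝ) * ε) * (δ / (4 * T)) ≤ T * (δ / (4 * T)) := by
      apply mul_le_mul_of_nonneg_right hkε (by positivity)
    have hTδ : T * (δ / (4 * T)) = δ / 4 := by field_simp
    linarith
  have hEu := h₁ ε hε hε1 k hk
  calc dist (ρ (k * ε)) ((B ε)^[k] z)
      ≤ dist (ρ (k * ε)) ((S ε)^[k] z) + dist ((S ε)^[k] z) ((B ε)^[k] z) :=
        dist_triangle _ _ _
    _ ≤ δ / 2 + δ / 4 := by
        have := dist_comm (ρ (k * ε)) ((S ε)^[k] z)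
        linarith [hEu]
    _ ≤ δ := by linarith
end

section
/- For ε > 0 set a(ε) := exp(−ε/2) and b(ε) := (√(ε² + 4) − ε)/2, and define F(ε) := (1 − a(ε)b(ε)) · (1/(1 − a(ε)²) + 1/(1 − b(ε)²)) − 2. Then F(ε) = ε⁴/1152 + O(ε⁵) as ε → 0⁺; that is, there exist constants K > 0 and ε₀ > 0 such that |F(ε) − ε⁴/1152| ≤ K ε⁵ for all 0 < ε < ε₀. -/
open Real

private lemma epsA (ε : ℝ) (h0 : 0 < ε) (h1 : ε ≤ 1/4) :
    (ε^3/48 + 17*ε^4/1536)*(ε^3/48 + 17*ε^4/1536) ≤ ε^6/2304 + ε^7/1500 := by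
  nlinarith [mul_nonneg (by linarith : (0:ℝ) ≤ 1/4 - ε) (le_of_lt (pow_pos h0 7)),
    le_of_lt (pow_pos h0 7)]

private lemma epsB (ε : ℝ) (h0 : 0 < ε) (h1 : ε ≤ 1/4) :
    ε^6/2304 - ε^7/1500 ≤ (ε^3/48 - 17*ε^4/1536)*(ε^3/48 - 17*ε^4/1536) := by
  nlinarith [le_of_lt (pow_pos h0 8), le_of_lt (pow_pos h0 7)]

private lemma epsC (ε : ℝ) (h0 : 0 < ε) (h1 : ε ≤ 1/4) :
    (ε^4/1152 - ε^5)*ε^2 ≤ (ε^6/2304 - ε^7/1500)*(2-ε) := by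
  nlinarith [le_of_lt (pow_pos h0 8), le_of_lt (pow_pos h0 7)]

private lemma epsD (ε : ℝ) (h0 : 0 < ε) (h1 : ε ≤ 1/4) :
    (ε^6/2304 + ε^7/1500)*2 ≤ (ε^4/1152 + ε^5)*(ε^2*(1 - 5*ε/4)) := by
  nlinarith [mul_nonneg (by linarith : (0:ℝ) ≤ 1/4 - ε) (le_of_lt (pow_pos h0 7)),
    le_of_lt (pow_pos h0 7)]

private lemma eps3 (ε : ℝ) (h0 : 0 < ε) (h1 : ε ≤ 1/4) :
    0 ≤ ε^3/48 - 17*ε^4/1536 := by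
  have h : ε^4 ≤ ε^3/4 := by
    nlinarith [mul_nonneg (by linarith : (0:ℝ) ≤ 1/4 - ε) (le_of_lt (pow_pos h0 3))]
  have h3 : (0:ℝ) ≤ ε^3 := le_of_lt (pow_pos h0 3)
  linarith

private lemma epsPows (ε : ℝ) (h0 : 0 < ε) (h1 : ε ≤ 1/4) :
    ε^2 ≤ ε/4 ∧ ε^3 ≤ ε^2/4 ∧ ε^4 ≤ ε^3/4 ∧ ε^5 ≤ ε^4/4 := by
  have hc : (0:ℝ) ≤ 1/4 - ε := by linarith
  refine ⟨?_, ?_, ?_, ?_⟩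
  · nlinarith [mul_nonneg hc (le_of_lt h0)]
  · nlinarith [mul_nonneg hc (sq_nonneg ε)]
  · nlinarith [mul_nonneg hc (le_of_lt (pow_pos h0 3))]
  · nlinarith [mul_nonneg hc (le_of_lt (pow_pos h0 4))]

set_option maxHeartbeats 1600000 in
private lemma core_estimate (ε a b : ℝ) (h0 : 0 < ε) (h1 : ε ≤ 1/4)
    (ha_pos : 0 < a) (ha_lt1 : a < 1)
    (hb_quad : b ^ 2 + ε * b = 1)
    (ha_ub : a ≤ 1 - ε/2 + ε^2/8 - ε^3/48 + 5*ε^4/1536)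
    (ha_lb : 1 - ε/2 + ε^2/8 - ε^3/48 - 5*ε^4/1536 ≤ a)
    (hb_ub : b ≤ 1 - ε/2 + ε^2/8)
    (hb_lb : 1 - ε/2 + ε^2/8 - ε^4/128 ≤ b)
    (hA_ub : 1 - a^2 ≤ ε)
    (hA_lb : ε - 3*ε^2/4 ≤ 1 - a^2) :
    |(1 - a * b) * (1 / (1 - a ^ 2) + 1 / (1 - b ^ 2)) - 2 - ε ^ 4 / 1152|
      ≤ 1 * ε ^ 5 := by
  obtain ⟨hq1, hq2, hq3, hq4⟩ := epsPows ε h0 h1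
  have hsq : (0:ℝ) ≤ ε^2 := sq_nonneg ε
  have hb_pos : 0 < b := by linarith
  have hb_lt1 : b < 1 := by linarith
  have hA_pos : 0 < 1 - a^2 :=
    by linarith [mul_pos (sub_pos.mpr ha_lt1) (by linarith : (0:ℝ) < 1 + a)]
  have hBeq : 1 - b^2 = ε * b := by linarith
  have hB_pos : 0 < 1 - b^2 := by rw [hBeq]; positivity
  have hD_pos : 0 < (1 - a^2) * (1 - b^2) := mul_pos hA_pos hB_pos
  -- identity
  have hkey : (1 - a * b) * (1 / (1 - a ^ 2) + 1 / (1 - b ^ 2)) - 2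
      = (b - a)^2 * (1 + a*b) / ((1 - a^2) * (1 - b^2)) := by
    field_simp
    ring
  rw [hkey]
  -- difference bounds
  have hd_ub : b - a ≤ ε^3/48 + 17*ε^4/1536 := by linarith
  have hd_lb : ε^3/48 - 17*ε^4/1536 ≤ b - a := by linarith
  have hd_nonneg : 0 ≤ ε^3/48 - 17*ε^4/1536 := eps3 ε h0 h1
  -- N bounds
  have hN1 := mul_self_le_mul_self (by linarith) hd_ub
  have hN2 := mul_self_le_mul_self hd_nonneg hd_lb
  have hN_ub : (b - a)^2 ≤ ε^6/2304 + ε^7/1500 := by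
    rw [pow_two]; exact le_trans hN1 (epsA ε h0 h1)
  have hN_lb : ε^6/2304 - ε^7/1500 ≤ (b - a)^2 := by
    rw [pow_two]; exact le_trans (epsB ε h0 h1) hN2
  have hN_nonneg : 0 ≤ (b - a)^2 := sq_nonneg _
  have hn2_nonneg : (0:ℝ) ≤ ε^6/2304 + ε^7/1500 := by positivity
  -- M bounds
  have haM : 1 - ε/2 ≤ a := by linarith
  have hbM : 1 - ε/2 ≤ b := by linarith
  have hM_ub : 1 + a*b ≤ 2 := by
    linarith [mul_pos (sub_pos.mpr ha_lt1) (sub_pos.mpr hb_lt1)]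
  have hM_lb : 2 - ε ≤ 1 + a*b := by
    linarith [mul_le_mul haM hbM (by linarith) (le_of_lt ha_pos)]
  have hM_pos : 0 < 1 + a*b := by linarith
  -- D bounds
  have hB_ub : 1 - b^2 ≤ ε := by
    rw [hBeq]; linarith [mul_nonneg (le_of_lt h0) (sub_nonneg.mpr hb_lt1.le)]
  have hB_lb : ε - ε^2/2 ≤ 1 - b^2 := by
    rw [hBeq]; linarith [mul_nonneg (le_of_lt h0) (by linarith : (0:ℝ) ≤ b - (1 - ε/2))]
  have hD_ub : (1 - a^2) * (1 - b^2) ≤ ε^2 := by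
    have h := mul_le_mul hA_ub hB_ub (le_of_lt hB_pos) (by linarith : (0:ℝ) ≤ ε)
    calc (1 - a^2) * (1 - b^2) ≤ ε * ε := h
      _ = ε^2 := (sq ε).symm
  have hD_lb : ε^2 * (1 - 5*ε/4) ≤ (1 - a^2) * (1 - b^2) := by
    have h := mul_le_mul hA_lb hB_lb (by linarith : (0:ℝ) ≤ ε - ε^2/2) (le_of_lt hA_pos)
    have h4 : (0:ℝ) ≤ ε^4 := le_of_lt (pow_pos h0 4)
    nlinarith [h, h4]
  rw [abs_le]
  constructor
  · have t1 : (ε^4/1152 - ε^5) * ((1 - a^2) * (1 - b^2)) ≤ (b - a)^2 * (1 + a*b) := by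
      rcases le_or_gt (ε^4/1152 - ε^5) 0 with h | h
      · exact le_trans (mul_nonpos_of_nonpos_of_nonneg h (le_of_lt hD_pos))
          (mul_nonneg hN_nonneg (le_of_lt hM_pos))
      · calc (ε^4/1152 - ε^5) * ((1 - a^2) * (1 - b^2))
            ≤ (ε^4/1152 - ε^5) * ε^2 := by
              exact mul_le_mul_of_nonneg_left hD_ub (le_of_lt h)
          _ ≤ (ε^6/2304 - ε^7/1500)*(2-ε) := epsC ε h0 h1
          _ ≤ (b - a)^2 * (1 + a*b) := by
              apply mul_le_mul hN_lb hM_lb (by linarith) hN_nonneg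
    have : ε^4/1152 - ε^5 ≤ (b - a)^2 * (1 + a*b) / ((1 - a^2) * (1 - b^2)) := by
      rw [le_div_iff₀ hD_pos]; exact t1
    linarith
  · have t2 : (b - a)^2 * (1 + a*b) ≤ (ε^4/1152 + ε^5) * ((1 - a^2) * (1 - b^2)) := by
      calc (b - a)^2 * (1 + a*b) ≤ (ε^6/2304 + ε^7/1500)*2 :=
            mul_le_mul hN_ub hM_ub (le_of_lt hM_pos) hn2_nonneg
        _ ≤ (ε^4/1152 + ε^5)*(ε^2*(1 - 5*ε/4)) := epsD ε h0 h1
        _ ≤ (ε^4/1152 + ε^5) * ((1 - a^2) * (1 - b^2)) := by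
            apply mul_le_mul_of_nonneg_left hD_lb (by positivity)
    have : (b - a)^2 * (1 + a*b) / ((1 - a^2) * (1 - b^2)) ≤ ε^4/1152 + ε^5 := by
      rw [div_le_iff₀ hD_pos]; exact t2
    linarith

private lemma exp_taylor4 (ε : ℝ) (h0 : 0 < ε) (h1 : ε ≤ 1/4) :
    |Real.exp (-ε/2) - (1 - ε/2 + ε^2/8 - ε^3/48)| ≤ 5*ε^4/1536 := by
  have hx : |(-ε/2 : ℝ)| ≤ 1 := by rw [abs_le]; constructor <;> nlinarith
  have h := Real.exp_bound hx (n := 4) (by norm_num)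
  have hsum : ∑ m ∈ Finset.range 4, (-ε/2) ^ m / m.factorial
      = 1 - ε/2 + ε^2/8 - ε^3/48 := by
    simp [Finset.sum_range_succ, Nat.factorial]; ring
  rw [hsum] at h
  have habs : |(-ε/2 : ℝ)| = ε/2 := by rw [abs_of_nonpos (by linarith)]; ring
  rw [habs] at h
  calc |Real.exp (-ε/2) - (1 - ε/2 + ε^2/8 - ε^3/48)| ≤ (ε/2)^4 * (5/(24*4)) := by
        simpa [Nat.factorial] using h
    _ ≤ 5*ε^4/1536 := by ring_nf; nlinarith

private lemma exp_taylor2 (ε : ℝ) (h0 : 0 < ε) (h1 : ε ≤ 1/4) :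
    Real.exp (-ε) ≤ 1 - ε + 3*ε^2/4 := by
  have hx : |(-ε : ℝ)| ≤ 1 := by rw [abs_le]; constructor <;> nlinarith
  have h := Real.exp_bound hx (n := 2) (by norm_num)
  have hsum : ∑ m ∈ Finset.range 2, (-ε) ^ m / m.factorial = 1 - ε := by
    simp [Finset.sum_range_succ, Nat.factorial]
    ring
  rw [hsum] at h
  have habs : |(-ε : ℝ)| = ε := by rw [abs_of_nonpos (by linarith)]; ring
  rw [habs] at h
  have h2 := (abs_le.mp h).2
  have h3 : Real.exp (-ε) - (1 - ε) ≤ ε^2 * (3/(2*2)) := by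
    calc Real.exp (-ε) - (1 - ε) ≤ ε ^ 2 * (↑(Nat.succ 2) / (↑(Nat.factorial 2) * 2)) := h2
      _ = ε^2 * (3/(2*2)) := by norm_num [Nat.factorial]
  linarith

/-- The symmetrized KL divergence between the two-time law of the stationary
Ornstein–Uhlenbeck process (correlation `a ε = exp (-ε/2)`) and the equal-marginal
Schrödinger bridge (correlation `b ε = (√(ε² + 4) - ε)/2`) for the standard Gaussian
marginal equals `ε⁴/1152 + O(ε⁵)` as `ε → 0⁺`. -/
theorem ou_sb_symmetrized_kl_expansion :
    ∃ K > (0 : ℝ), ∃ ε₀ > (0 : ℝ), ∀ ε : ℝ, 0 < ε → ε < ε₀ →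
      |((1 - Real.exp (-ε / 2) * ((Real.sqrt (ε ^ 2 + 4) - ε) / 2)) *
          (1 / (1 - (Real.exp (-ε / 2)) ^ 2)
            + 1 / (1 - ((Real.sqrt (ε ^ 2 + 4) - ε) / 2) ^ 2)) - 2)
        - ε ^ 4 / 1152| ≤ K * ε ^ 5 := by
  refine ⟨1, one_pos, 1/4, by norm_num, fun ε h0 h1 => ?_⟩
  have h1' : ε ≤ 1/4 := le_of_lt h1
  have hs2 : Real.sqrt (ε ^ 2 + 4) ^ 2 = ε ^ 2 + 4 := Real.sq_sqrt (by positivity)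
  have hs_ub : Real.sqrt (ε ^ 2 + 4) ≤ 2 + ε^2/4 := by
    have h := Real.sqrt_le_sqrt (show ε^2 + 4 ≤ (2 + ε^2/4)^2 by nlinarith [sq_nonneg ε])
    rwa [Real.sqrt_sq (by positivity)] at h
  have hs_lb : 2 + ε^2/4 - ε^4/64 ≤ Real.sqrt (ε ^ 2 + 4) := by
    have e2 : ε^2 ≤ 1/16 := by nlinarith
    have e4 : ε^4 ≤ 1/256 := by nlinarith [sq_nonneg ε, e2]
    have hL : (0:ℝ) ≤ 2 + ε^2/4 - ε^4/64 := by
      linarith [sq_nonneg ε]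
    have hsq : (2 + ε^2/4 - ε^4/64)^2 ≤ ε^2 + 4 := by
      nlinarith [le_of_lt (pow_pos h0 6), le_of_lt (pow_pos h0 8), sq_nonneg ε]
    calc 2 + ε^2/4 - ε^4/64 = Real.sqrt ((2 + ε^2/4 - ε^4/64)^2) := (Real.sqrt_sq hL).symm
      _ ≤ Real.sqrt (ε^2 + 4) := Real.sqrt_le_sqrt hsq
  have hb_quad : ((Real.sqrt (ε ^ 2 + 4) - ε) / 2) ^ 2 + ε * ((Real.sqrt (ε ^ 2 + 4) - ε) / 2) = 1 := by
    linear_combination hs2 / 4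
  have ha_pos : 0 < Real.exp (-ε / 2) := Real.exp_pos _
  have ha_lt1 : Real.exp (-ε / 2) < 1 := Real.exp_lt_one_iff.mpr (by linarith)
  have ht := exp_taylor4 ε h0 h1'
  rw [abs_le] at ht
  have hneg : (-ε/2 : ℝ) = -ε / 2 := by ring
  rw [hneg] at ht
  have ha_ub : Real.exp (-ε / 2) ≤ 1 - ε/2 + ε^2/8 - ε^3/48 + 5*ε^4/1536 := by
    linarith [ht.2]
  have ha_lb : 1 - ε/2 + ε^2/8 - ε^3/48 - 5*ε^4/1536 ≤ Real.exp (-ε / 2) := by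
    linarith [ht.1]
  have ha2 : Real.exp (-ε / 2) ^ 2 = Real.exp (-ε) := by
    rw [← Real.exp_nat_mul]; norm_num; ring_nf
  have hA_ub : 1 - Real.exp (-ε / 2) ^ 2 ≤ ε := by
    rw [ha2]; linarith [Real.add_one_le_exp (-ε)]
  have hA_lb : ε - 3*ε^2/4 ≤ 1 - Real.exp (-ε / 2) ^ 2 := by
    rw [ha2]; linarith [exp_taylor2 ε h0 h1']
  have hb_ub : (Real.sqrt (ε ^ 2 + 4) - ε) / 2 ≤ 1 - ε/2 + ε^2/8 := by linarith
  have hb_lb : 1 - ε/2 + ε^2/8 - ε^4/128 ≤ (Real.sqrt (ε ^ 2 + 4) - ε) / 2 := by linarith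
  have := core_estimate ε (Real.exp (-ε / 2)) ((Real.sqrt (ε ^ 2 + 4) - ε) / 2)
    h0 h1' ha_pos ha_lt1 hb_quad ha_ub ha_lb hb_ub hb_lb hA_ub hA_lb
  calc |(1 - Real.exp (-ε / 2) * ((Real.sqrt (ε ^ 2 + 4) - ε) / 2)) *
          (1 / (1 - Real.exp (-ε / 2) ^ 2)
            + 1 / (1 - ((Real.sqrt (ε ^ 2 + 4) - ε) / 2) ^ 2)) - 2 - ε ^ 4 / 1152|
      ≤ 1 * ε ^ 5 := this
    _ = 1 * ε ^ 5 := rfl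
end

section
/- For ε > 0 and v > 0 define C_ε(v) := (√(v² + ε²/4) − ε/2)/v. Fix η > 0 and 0 < ε ≤ η², and define a : ℕ → ℝ by a(0) = η² and a(k+1) = (2 − C_ε(a(k)))² · a(k). Then for all k: (i) a(k+1) ≥ a(k), so a(k) ≥ η²; and (ii) a(k+1) ≤ a(k) + 3ε; consequently a(k) ≤ η² + 3kε for all k ∈ ℕ. -/
open Real

/-- `C_ε(v) = (√(v² + ε²/4) − ε/2)/v`, the correlation coefficient of the equal-marginal
Schrödinger bridge at temperature `ε` with Gaussian marginal of variance `v`. -/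
noncomputable def sbCorr (ε v : ℝ) : ℝ := (Real.sqrt (v ^ 2 + ε ^ 2 / 4) - ε / 2) / v

lemma sbCorr_step (ε v : ℝ) (hε : 0 < ε) (hv : 0 < v) :
    v ≤ (2 - sbCorr ε v) ^ 2 * v ∧ (2 - sbCorr ε v) ^ 2 * v ≤ v + 3 * ε := by
  set s := Real.sqrt (v ^ 2 + ε ^ 2 / 4) with hs
  have hs0 : 0 ≤ s := Real.sqrt_nonneg _
  have hsv : v ≤ s := by
    rw [hs]
    nlinarith [Real.sq_sqrt (show (0:ℝ) ≤ v ^ 2 + ε ^ 2 / 4 by positivity), Real.sqrt_nonneg (v ^ 2 + ε ^ 2 / 4)]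
  have hsle : s ≤ v + ε / 2 := by
    rw [hs]
    have : v ^ 2 + ε ^ 2 / 4 ≤ (v + ε / 2) ^ 2 := by nlinarith
    calc Real.sqrt (v ^ 2 + ε ^ 2 / 4) ≤ Real.sqrt ((v + ε / 2) ^ 2) := Real.sqrt_le_sqrt this
      _ = v + ε / 2 := Real.sqrt_sq (by positivity)
  have hC : sbCorr ε v = (s - ε / 2) / v := rfl
  have hCv : sbCorr ε v * v = s - ε / 2 := by
    rw [hC]; field_simp
  have hC0 : 0 ≤ sbCorr ε v := by
    rw [hC]
    apply div_nonneg _ hv.le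
    have : ε / 2 ≤ s := by
      rw [hs]
      calc ε / 2 = Real.sqrt ((ε / 2) ^ 2) := (Real.sqrt_sq (by positivity)).symm
        _ ≤ _ := Real.sqrt_le_sqrt (by nlinarith)
    linarith
  have hC1 : sbCorr ε v ≤ 1 := by
    rw [hC, div_le_one hv]
    linarith
  constructor
  · nlinarith [mul_nonneg (mul_nonneg (sub_nonneg.2 hC1) (by linarith : (0:ℝ) ≤ 3 - sbCorr ε v)) hv.le]
  · nlinarith [hCv, mul_nonneg (sub_nonneg.2 hC1) hs0, mul_nonneg hC0 hε.le]

/-- The variances `a k` of the iterated Schrödinger bridge scheme for the heat flow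
started from `N(0, η² I_d)` with step size `0 < ε ≤ η²` are monotonically increasing,
bounded below by `η²`, increase by at most `3ε` per step, and hence satisfy
`a k ≤ η² + 3kε`. -/
theorem sb_scheme_heat_flow_variance_bounds (η ε : ℝ) (hη : 0 < η)
    (hε : 0 < ε) (hεη : ε ≤ η ^ 2)
    (a : ℕ → ℝ) (ha0 : a 0 = η ^ 2)
    (harec : ∀ k : ℕ, a (k + 1) = (2 - sbCorr ε (a k)) ^ 2 * a k) :
    ∀ k : ℕ, a k ≤ a (k + 1) ∧ η ^ 2 ≤ a k ∧
      a (k + 1) ≤ a k + 3 * ε ∧ a k ≤ η ^ 2 + 3 * k * ε := by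
  have key : ∀ k : ℕ, η ^ 2 ≤ a k ∧ a k ≤ η ^ 2 + 3 * k * ε := by
    intro k
    induction k with
    | zero => simp [ha0]
    | succ n ih =>
      obtain ⟨h1, h2⟩ := ih
      have hv : 0 < a n := lt_of_lt_of_le (by positivity) h1
      obtain ⟨hlo, hhi⟩ := sbCorr_step ε (a n) hε hv
      rw [harec n] at *
      constructor
      · linarith
      · push_cast; linarith
  intro k
  obtain ⟨h1, h2⟩ := key k
  have hv : 0 < a k := lt_of_lt_of_le (by positivity) h1
  obtain ⟨hlo, hhi⟩ := sbCorr_step ε (a k) hε hv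
  rw [harec k]
  exact ⟨hlo, h1, hhi, h2⟩
end

section
/- Fix η > 0 and 0 < ε ≤ η², and define b : ℕ → ℝ by b(0) = η² and b(k+1) = (1 + ε/(2b(k)))² · b(k). Then for all k: (i) b(k+1) ≥ b(k), so b(k) ≥ η²; and (ii) b(k+1) ≤ b(k) + (5/4)ε; consequently b(k) ≤ η² + (5/4)kε for all k ∈ ℕ. -/
lemma euler_step_eq (ε x : ℝ) (hx : 0 < x) :
    (1 + ε / (2 * x)) ^ 2 * x = x + ε + ε ^ 2 / (4 * x) := by
  field_simp
  ring

/-- The variances `b k` of the explicit Euler scheme for the heat flow started from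
`N(0, η² I_d)` with step size `0 < ε ≤ η²` are monotonically increasing, bounded below
by `η²`, increase by at most `(5/4)ε` per step, and hence satisfy
`b k ≤ η² + (5/4)kε`. -/
theorem euler_scheme_heat_flow_variance_bounds (η ε : ℝ) (hη : 0 < η)
    (hε : 0 < ε) (hεη : ε ≤ η ^ 2)
    (b : ℕ → ℝ) (hb0 : b 0 = η ^ 2)
    (hbrec : ∀ k : ℕ, b (k + 1) = (1 + ε / (2 * b k)) ^ 2 * b k) :
    ∀ k : ℕ, b k ≤ b (k + 1) ∧ η ^ 2 ≤ b k ∧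
      b (k + 1) ≤ b k + (5 / 4) * ε ∧ b k ≤ η ^ 2 + (5 / 4) * k * ε := by
  have hη2 : 0 < η ^ 2 := pow_pos hη 2
  have key : ∀ k : ℕ, η ^ 2 ≤ b k ∧ b k ≤ η ^ 2 + (5 / 4) * k * ε := by
    intro k
    induction k with
    | zero => simp [hb0]
    | succ n ih =>
      obtain ⟨hlo, hhi⟩ := ih
      have hbn : 0 < b n := lt_of_lt_of_le hη2 hlo
      have heq := hbrec n
      rw [euler_step_eq ε (b n) hbn] at heq
      have hq : ε ^ 2 / (4 * b n) ≤ ε / 4 := by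
        rw [div_le_div_iff₀ (by linarith) (by norm_num)]
        have : ε ≤ b n := le_trans hεη hlo
        nlinarith
      have hqpos : 0 < ε ^ 2 / (4 * b n) := by positivity
      constructor
      · linarith
      · push_cast
        have : b (n + 1) ≤ b n + (5 / 4) * ε := by linarith
        linarith
  intro k
  obtain ⟨hlo, hhi⟩ := key k
  obtain ⟨hlo', hhi'⟩ := key (k + 1)
  have hbk : 0 < b k := lt_of_lt_of_le hη2 hlo
  have heq := hbrec k
  rw [euler_step_eq ε (b k) hbk] at heq
  have hq : ε ^ 2 / (4 * b k) ≤ ε / 4 := by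
    rw [div_le_div_iff₀ (by linarith) (by norm_num)]
    have : ε ≤ b k := le_trans hεη hlo
    nlinarith
  have hqpos : 0 < ε ^ 2 / (4 * b k) := by positivity
  exact ⟨by linarith, hlo, by linarith, hhi⟩
end

section
/- For ε > 0 and v > 0 define C_ε(v) := (√(v² + ε²/4) − ε/2)/v. Fix 0 < η < 1, T > 0, and 0 < ε ≤ min(η²/(1 − η²), 1/3). Define a : ℕ → ℝ by a(0) = η² and a(k+1) = (2 − C_ε(a(k)/(1 − a(k))))² · a(k). Then for all k ∈ ℕ: (i) a(k) < a(k+1); (ii) a(k+1) ≤ a(k) + 3ε(1 − a(k)); and hence (iii) η² ≤ a(k) and 1 − a(k) ≥ (1 − 3ε)^k (1 − η²) > 0, so that a(k) < 1 for all k. -/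
open Real

lemma sb_step (ε b : ℝ) (hε : 0 < ε) (hb0 : 0 < b) (hb1 : b < 1) :
    b < (2 - sbCorr ε (b / (1 - b))) ^ 2 * b ∧
    (2 - sbCorr ε (b / (1 - b))) ^ 2 * b ≤ b + 3 / 2 * ε * (1 - b) := by
  have h1b : 0 < 1 - b := by linarith
  set v : ℝ := b / (1 - b) with hvdef
  have hv : 0 < v := div_pos hb0 h1b
  set s : ℝ := Real.sqrt (v ^ 2 + ε ^ 2 / 4) with hsdef
  have hs1 : v ≤ s := by
    have := Real.sqrt_le_sqrt (show v ^ 2 ≤ v ^ 2 + ε ^ 2 / 4 by nlinarith)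
    rwa [Real.sqrt_sq hv.le] at this
  have hs2 : s < v + ε / 2 := by
    rw [hsdef, show v + ε / 2 = Real.sqrt ((v + ε / 2) ^ 2) from
      (Real.sqrt_sq (by positivity)).symm]
    exact Real.sqrt_lt_sqrt (by positivity) (by nlinarith)
  have hs3 : ε / 2 < s := by
    rw [hsdef]
    rw [show ε / 2 = Real.sqrt ((ε / 2) ^ 2) from (Real.sqrt_sq (by positivity)).symm]
    exact Real.sqrt_lt_sqrt (by positivity) (by nlinarith)
  have hC : sbCorr ε v = (s - ε / 2) / v := rfl
  set C : ℝ := sbCorr ε v with hCdef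
  have hC0 : 0 < C := by rw [hC]; exact div_pos (by linarith) hv
  have hC1 : C < 1 := by
    rw [hC, div_lt_one hv]; linarith
  have h1Cv : (1 - C) * v ≤ ε / 2 := by
    have : C * v = s - ε / 2 := by
      rw [hC, div_mul_cancel₀ _ hv.ne']
    nlinarith
  have hbv : b = v * (1 - b) := by
    rw [hvdef]; field_simp
  constructor
  · nlinarith [mul_pos (mul_pos (show (0:ℝ) < 1 - C by linarith)
      (show (0:ℝ) < 3 - C by linarith)) hb0]
  · nlinarith [mul_pos hv h1b, mul_le_mul_of_nonneg_right h1Cv (show (0:ℝ) ≤ (3 - C) * (1 - b) by nlinarith)]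

/-- The variances `a k` of the iterated Schrödinger bridge scheme for the gradient flow
of (one half) KL divergence relative to `N(0, I_d)`, started from `N(0, η² I_d)` with
`η² < 1` and step size `0 < ε ≤ min(η²/(1 − η²), 1/3)`, increase strictly, satisfy
`a (k+1) ≤ a k + 3ε(1 − a k)`, and remain within `[η², 1)`, with
`1 − a k ≥ (1 − 3ε)^k (1 − η²)`. -/
theorem sb_scheme_kl_flow_variance_bounds (η ε : ℝ) (hη0 : 0 < η) (hη1 : η < 1)
    (hε : 0 < ε) (hεub : ε ≤ min (η ^ 2 / (1 - η ^ 2)) (1 / 3))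
    (a : ℕ → ℝ) (ha0 : a 0 = η ^ 2)
    (harec : ∀ k : ℕ, a (k + 1) = (2 - sbCorr ε (a k / (1 - a k))) ^ 2 * a k) :
    ∀ k : ℕ, a k < a (k + 1) ∧
      a (k + 1) ≤ a k + 3 * ε * (1 - a k) ∧
      η ^ 2 ≤ a k ∧ (1 - 3 * ε) ^ k * (1 - η ^ 2) ≤ 1 - a k ∧ a k < 1 := by
  have hε3 : ε ≤ 1 / 3 := le_trans hεub (min_le_right _ _)
  have hη2 : 0 < η ^ 2 := by positivity
  have hη21 : η ^ 2 < 1 := by nlinarith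
  have hq : 0 < 1 - 3 / 2 * ε := by linarith
  -- invariant
  have Q : ∀ k : ℕ, η ^ 2 ≤ a k ∧ (1 - 3 / 2 * ε) ^ k * (1 - η ^ 2) ≤ 1 - a k := by
    intro k
    induction k with
    | zero => simp [ha0]
    | succ n ih =>
      obtain ⟨ih1, ih2⟩ := ih
      have hpow : 0 < (1 - 3 / 2 * ε) ^ n * (1 - η ^ 2) :=
        mul_pos (pow_pos hq n) (by linarith)
      have ha0n : 0 < a n := lt_of_lt_of_le hη2 ih1
      have ha1n : a n < 1 := by nlinarith
      obtain ⟨hlt, hle⟩ := sb_step ε (a n) hε ha0n ha1n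
      rw [← harec n] at hlt hle
      constructor
      · linarith
      · have : (1 - 3 / 2 * ε) ^ (n + 1) * (1 - η ^ 2)
            = (1 - 3 / 2 * ε) * ((1 - 3 / 2 * ε) ^ n * (1 - η ^ 2)) := by ring
        rw [this]
        nlinarith [mul_le_mul_of_nonneg_left ih2 hq.le]
  intro k
  obtain ⟨h1, h2⟩ := Q k
  have hpow : 0 < (1 - 3 / 2 * ε) ^ k * (1 - η ^ 2) :=
    mul_pos (pow_pos hq k) (by linarith)
  have ha0k : 0 < a k := lt_of_lt_of_le hη2 h1
  have ha1k : a k < 1 := by nlinarith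
  obtain ⟨hlt, hle⟩ := sb_step ε (a k) hε ha0k ha1k
  rw [← harec k] at hlt hle
  refine ⟨hlt, by nlinarith, h1, ?_, ha1k⟩
  calc (1 - 3 * ε) ^ k * (1 - η ^ 2)
      ≤ (1 - 3 / 2 * ε) ^ k * (1 - η ^ 2) := by
        apply mul_le_mul_of_nonneg_right _ (by linarith)
        exact pow_le_pow_left₀ (by linarith) (by linarith) k
    _ ≤ 1 - a k := h2
end
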